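/- Let X and Y be standard Borel spaces and let P and Q be probability measures on X × Y with disintegrations P = P_X ⊗ κ_P and Q = Q_X ⊗ κ_Q, where P_X, Q_X are the first marginals and κ_P, κ_Q are Markov kernels from X to Y (regular conditional distributions of the second coordinate given the first). If KL(P ‖ Q) < ∞, then KL(P ‖ Q) ≥ KL(P_X ‖ Q_X), and equality holds if and only if κ_P(x) = κ_Q(x) for P_X-almost every x ∈ X. -/

import Mathlib

open MeasureTheory ProbabilityTheory Classical

open scoped ENNReal

/-- Kullback-Leibler divergence between two measures, valued in `[0, ∞]`:
`KL(μ‖ν) = ∫ log(dμ/dν) dμ` when `μ ≪ ν` and the log-likelihood ratio is `μ`-integrable,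
and `+∞` otherwise. -/
noncomputable def KL {α : Type*} [MeasurableSpace α] (μ ν : Measure α) : ℝ≥0∞ :=
  if μ ≪ ν ∧ Integrable (llr μ ν) μ then ENNReal.ofReal (∫ x, llr μ ν x ∂μ) else ∞

/-!
By the chain rule, `KL(P ‖ Q) = KL(P_X ‖ Q_X) + KL(P_X ⊗ κP ‖ P_X ⊗ κQ)`. The second summand
vanishes exactly when `P_X ⊗ κP = P_X ⊗ κQ`, i.e. when `κP = κQ` holds `P_X`-a.e., and the first
summand is finite, so it can be cancelled.
-/

open InformationTheory

/-- `klDiv` carries the correction term `ν univ - μ univ`, which vanishes for equal masses. -/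
lemma KL_eq_klDiv {α : Type*} [MeasurableSpace α] {μ ν : Measure α} (h : μ Set.univ = ν Set.univ) :
    KL μ ν = klDiv μ ν := by
  by_cases hfin : μ ≪ ν ∧ Integrable (llr μ ν) μ
  · rw [KL, if_pos hfin, klDiv_of_ac_of_integrable hfin.1 hfin.2, measureReal_def,
      measureReal_def, h, add_sub_cancel_right]
  · rw [KL, if_neg hfin, eq_comm, ← not_ne_iff, klDiv_ne_top_iff]
    exact hfin

lemma klDiv_eq_klDiv_fst_add {X Y : Type*} [MeasurableSpace X] [MeasurableSpace Y]
    {P Q : Measure (X × Y)} [IsFiniteMeasure P] [IsFiniteMeasure Q]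
    {κP κQ : Kernel X Y} [IsMarkovKernel κP] [IsMarkovKernel κQ]
    (hP : P = P.fst ⊗ₘ κP) (hQ : Q = Q.fst ⊗ₘ κQ) :
    klDiv P Q = klDiv P.fst Q.fst + klDiv (P.fst ⊗ₘ κP) (P.fst ⊗ₘ κQ) := by
  calc klDiv P Q = klDiv (P.fst ⊗ₘ κP) (Q.fst ⊗ₘ κQ) := by rw [← hP, ← hQ]
    _ = _ := klDiv_compProd_eq_add P.fst Q.fst κP κQ

theorem kl_fst_le_of_disintegration_general
    {X Y : Type*} [MeasurableSpace X] [MeasurableSpace Y]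
    [StandardBorelSpace Y]
    (P Q : Measure (X × Y)) [IsProbabilityMeasure P] [IsProbabilityMeasure Q]
    (κP κQ : Kernel X Y) [IsMarkovKernel κP] [IsMarkovKernel κQ]
    (hP : P = P.fst ⊗ₘ κP) (hQ : Q = Q.fst ⊗ₘ κQ)
    (hfin : KL P Q < ∞) :
    KL P.fst Q.fst ≤ KL P Q ∧
      (KL P Q = KL P.fst Q.fst ↔ ∀ᵐ x ∂P.fst, κP x = κQ x) := by
  have hKL : KL P Q = klDiv P Q := KL_eq_klDiv (by simp)
  have hKL_fst : KL P.fst Q.fst = klDiv P.fst Q.fst := KL_eq_klDiv (by simp)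
  rw [hKL, hKL_fst]
  rw [hKL] at hfin
  have hchain := klDiv_eq_klDiv_fst_add hP hQ
  have hfst_le : klDiv P.fst Q.fst ≤ klDiv P Q := hchain ▸ le_self_add
  refine ⟨hfst_le, ?_⟩
  rw [hchain]
  nth_rw 2 [← add_zero (klDiv P.fst Q.fst)]
  rw [ENNReal.add_right_inj (hfst_le.trans_lt hfin).ne, klDiv_eq_zero_iff,
    Kernel.compProd_eq_iff]
  rfl

/-- **Data-processing / chain rule for KL on a product space.** If `P = P.fst ⊗ₘ κP` and
`Q = Q.fst ⊗ₘ κQ` are disintegrations of probability measures on `X × Y` and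
`KL(P ‖ Q) < ∞`, then `KL(P ‖ Q) ≥ KL(P.fst ‖ Q.fst)`, with equality if and only if
`κP x = κQ x` for `P.fst`-almost every `x`. -/
theorem kl_fst_le_of_disintegration
    {X Y : Type*} [MeasurableSpace X] [MeasurableSpace Y]
    [StandardBorelSpace X] [StandardBorelSpace Y]
    (P Q : Measure (X × Y)) [IsProbabilityMeasure P] [IsProbabilityMeasure Q]
    (κP κQ : Kernel X Y) [IsMarkovKernel κP] [IsMarkovKernel κQ]
    (hP : P = P.fst ⊗ₘ κP) (hQ : Q = Q.fst ⊗ₘ κQ)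
    (hfin : KL P Q < ∞) :
    KL P.fst Q.fst ≤ KL P Q ∧
      (KL P Q = KL P.fst Q.fst ↔ ∀ᵐ x ∂P.fst, κP x = κQ x) :=
  kl_fst_le_of_disintegration_general P Q κP κQ hP hQ hfin
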